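/- There is a constant C > 0 depending only on n such that the following holds. Let n ≥ 1, let q be an odd prime power, and let A ⊆ M_n(𝔽_q) with |A| ≥ C · q^{n²−1/4}. Then {a₁a₂ + a₃ + a₄ : a₁, a₂, a₃, a₄ ∈ A} = M_n(𝔽_q), i.e., every matrix M ∈ M_n(𝔽_q) can be written as M = a₁a₂ + a₃ + a₄ with a₁, a₂, a₃, a₄ ∈ A. -/

import Mathlib

/-!
Fourier analysis on `M_n(𝔽_q)` with the characters `x ↦ ψ (tr (x ξ))`. If `M` is not of the form
`a₁ a₂ + a₃ + a₄`, orthogonality gives `0 = ∑ ξ, S ξ * Â ξ ^ 2 * ψ (tr (-M ξ))` with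
`S ξ = ∑ a₁ a₂ ∈ A, ψ (tr (a₁ a₂ ξ))` and `Â ξ = ∑ a ∈ A, ψ (tr (a ξ))`. The term `ξ = 0` is `|A|⁴`,
and by Parseval the others sum to at most `max_{ξ ≠ 0} |S ξ| · q^{n²} |A|`. Cauchy–Schwarz in `a₁`
and Parseval again bound `|S ξ|²` by `|A| q^{n²}` times the number of pairs `(b, b') ∈ A²` with
`b ξ = b' ξ`, which is at most `|A| q^{n(n-1)}` because for `ξ ≠ 0` the rows of `b - b'` lie in
the left kernel of `ξ`, a proper subspace. Hence `|A|⁴ ≤ q^{4n² - n}`, which `|A| ≥ 2 q^{n² - 1/4}` rules out when `n ≥ 1`.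
-/

open Matrix Finset

lemma card_filter_map_eq_map_le {G H : Type*} [AddGroup G] [Fintype G] [DecidableEq G]
    [AddGroup H] [DecidableEq H] (g : G →+ H) (s : Finset G) :
    #{p ∈ s ×ˢ s | g p.1 = g p.2} ≤ #s * #{c | g c = 0} := by
  rw [← card_product]
  refine card_le_card_of_injOn (fun p => (p.1, p.1 - p.2)) (fun p hp => ?_) fun p _ p' _ h => ?_
  · simp only [coe_filter, mem_product, Set.mem_ofPred_eq] at hp
    simp [hp.1.1, map_sub, hp.2]
  · simp only [Prod.mk.injEq] at h
    exact Prod.ext h.1 (by simpa [h.1] using h.2)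

lemma card_matrix (m n R : Type*) [Fintype m] [Fintype n] [DecidableEq m] [DecidableEq n]
    [Fintype R] :
    Fintype.card (Matrix m n R) = Fintype.card R ^ (Fintype.card m * Fintype.card n) := by
  rw [← Nat.card_eq_fintype_card, Matrix, Nat.card_fun, Nat.card_fun]
  simp [← pow_mul, mul_comm]

section

variable {ι F : Type*} [Fintype ι] [DecidableEq ι] [Field F] [Fintype F] (ψ : AddChar F ℂ)

lemma sum_addChar_trace_mul_eq_zero (hψ : ψ ≠ 1) {y : Matrix ι ι F} (hy : y ≠ 0) :
    ∑ x, ψ (trace (y * x)) = 0 := by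
  obtain ⟨x₀, hx₀⟩ : ∃ x₀, trace (y * x₀) ≠ 0 := by
    simpa using mt ext_iff_trace_mul_right.2 hy
  obtain ⟨t, ht⟩ := AddChar.ne_one_iff.1 hψ
  refine AddChar.sum_eq_zero_of_ne_one (ψ := ψ.compAddMonoidHom
    ((traceAddMonoidHom ι F).comp (AddMonoidHom.mulLeft y)))
    (AddChar.ne_one_iff.2 ⟨(t / trace (y * x₀)) • x₀, ?_⟩)
  simpa [mul_smul_comm, trace_smul, div_mul_cancel₀ _ hx₀] using ht

lemma sum_fourier_mul_add_add (A : Finset (Matrix ι ι F)) (M : Matrix ι ι F) :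
    ∑ ξ, (∑ a₁ ∈ A, ∑ a₂ ∈ A, ψ (trace (a₁ * a₂ * ξ))) * (∑ a ∈ A, ψ (trace (a * ξ))) ^ 2 *
        ψ (trace (-M * ξ)) =
      ∑ a₁ ∈ A, ∑ a₂ ∈ A, ∑ a₃ ∈ A, ∑ a₄ ∈ A, ∑ ξ, ψ (trace ((a₁ * a₂ + a₃ + a₄ - M) * ξ)) := by
  simp only [sum_comm (s := A) (t := (univ : Finset (Matrix ι ι F)))]
  refine sum_congr rfl fun ξ _ => ?_
  simp only [sub_eq_add_neg, add_mul, trace_add, AddChar.map_add_eq_mul, ← sum_mul, ← mul_sum]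
  ring

variable [DecidableEq F]

lemma sum_addChar_trace_mul (hψ : ψ ≠ 1) (y : Matrix ι ι F) :
    ∑ x, ψ (trace (y * x)) = if y = 0 then (Fintype.card (Matrix ι ι F) : ℂ) else 0 := by
  split_ifs with hy
  · simp [hy]
  · exact sum_addChar_trace_mul_eq_zero ψ hψ hy

lemma sum_norm_sq_sum_addChar_trace_mul (hψ : ψ ≠ 1) {κ : Type*} (s : Finset κ)
    (f : κ → Matrix ι ι F) :
    ∑ x, ‖∑ b ∈ s, ψ (trace (f b * x))‖ ^ 2 =
      Fintype.card (Matrix ι ι F) * #{p ∈ s ×ˢ s | f p.1 = f p.2} := by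
  apply Complex.ofReal_injective
  push_cast
  calc ∑ x, (‖∑ b ∈ s, ψ (trace (f b * x))‖ : ℂ) ^ 2
      = ∑ x, ∑ b ∈ s, ∑ b' ∈ s, ψ (trace (f b * x) - trace (f b' * x)) := by
        refine sum_congr rfl fun x _ => ?_
        rw [← Complex.mul_conj', map_sum, sum_mul_sum]
        simp only [← AddChar.map_neg_eq_conj, ← AddChar.map_add_eq_mul, sub_eq_add_neg]
    _ = ∑ p ∈ s ×ˢ s, if f p.1 = f p.2 then (Fintype.card (Matrix ι ι F) : ℂ) else 0 := by
        rw [sum_comm, sum_product]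
        refine sum_congr rfl fun b _ => ?_
        rw [sum_comm]
        simp only [← trace_sub, ← sub_mul, sum_addChar_trace_mul ψ hψ, sub_eq_zero]
    _ = _ := by rw [sum_ite, sum_const_zero, add_zero, sum_const, nsmul_eq_mul, mul_comm]

lemma sum_norm_sq_sum_addChar_trace_mul' (hψ : ψ ≠ 1) (A : Finset (Matrix ι ι F)) :
    ∑ x, ‖∑ a ∈ A, ψ (trace (a * x))‖ ^ 2 = Fintype.card (Matrix ι ι F) * #A := by
  refine (sum_norm_sq_sum_addChar_trace_mul ψ hψ A id).trans ?_
  simp only [id, ← diag_eq_filter, diag_card]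

lemma card_filter_mul_eq_zero_le {ξ : Matrix ι ι F} (hξ : ξ ≠ 0) :
    #{c : Matrix ι ι F | c * ξ = 0} ≤
      Fintype.card F ^ ((Fintype.card ι - 1) * Fintype.card ι) := by
  classical
  set W := LinearMap.ker (vecMulLinear ξ)
  have hW : W ≠ ⊤ := by
    contrapose! hξ
    ext i j
    have hi : Pi.single i 1 ∈ W := hξ ▸ Submodule.mem_top
    simpa using congr_fun (LinearMap.mem_ker.1 hi) j
  have hcardW : #(W : Set (ι → F)).toFinset ≤ Fintype.card F ^ (Fintype.card ι - 1) := by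
    have := Submodule.finrank_lt hW
    rw [Module.finrank_fintype_fun_eq_card] at this
    rw [Set.toFinset_card, ← Nat.card_eq_fintype_card, SetLike.coe_sort_coe,
      Nat.card_eq_fintype_card, Module.card_eq_pow_finrank (K := F)]
    exact Nat.pow_le_pow_right Fintype.card_pos (by omega)
  calc #{c : Matrix ι ι F | c * ξ = 0}
      ≤ #(Fintype.piFinset fun _ : ι => (W : Set (ι → F)).toFinset) :=
        card_le_card_of_injOn (fun c i => c i) (fun c hc => by
          simpa [W, ← Matrix.ext_iff, mul_apply_eq_vecMul, funext_iff] using hc) fun _ _ _ _ h => h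
    _ ≤ Fintype.card F ^ ((Fintype.card ι - 1) * Fintype.card ι) := by
      rw [Fintype.card_piFinset, prod_const, card_univ, pow_mul]
      exact Nat.pow_le_pow_left hcardW _

lemma norm_sq_sum_sum_addChar_trace_mul_mul_le (hψ : ψ ≠ 1) (A : Finset (Matrix ι ι F))
    {ξ : Matrix ι ι F} (hξ : ξ ≠ 0) :
    ‖∑ a₁ ∈ A, ∑ a₂ ∈ A, ψ (trace (a₁ * a₂ * ξ))‖ ^ 2 ≤
      (#A : ℝ) ^ 2 * Fintype.card (Matrix ι ι F) *
        (Fintype.card F : ℝ) ^ ((Fintype.card ι - 1) * Fintype.card ι) := by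
  have hcollide : #{p ∈ A ×ˢ A | p.1 * ξ = p.2 * ξ} ≤
      #A * Fintype.card F ^ ((Fintype.card ι - 1) * Fintype.card ι) :=
    (card_filter_map_eq_map_le (AddMonoidHom.mulRight ξ) A).trans
      (Nat.mul_le_mul_left _ (card_filter_mul_eq_zero_le hξ))
  calc ‖∑ a₁ ∈ A, ∑ a₂ ∈ A, ψ (trace (a₁ * a₂ * ξ))‖ ^ 2
      ≤ #A * ∑ a₁ ∈ A, ‖∑ a₂ ∈ A, ψ (trace (a₁ * a₂ * ξ))‖ ^ 2 :=
        (pow_le_pow_left₀ (norm_nonneg _) (norm_sum_le _ _) 2).trans sq_sum_le_card_mul_sum_sq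
    _ ≤ #A * ∑ x, ‖∑ b ∈ A, ψ (trace (b * ξ * x))‖ ^ 2 := by
        simp only [mul_assoc, trace_mul_comm _ (_ * ξ)]
        gcongr
        exact subset_univ A
    _ = #A * (Fintype.card (Matrix ι ι F) * #{p ∈ A ×ˢ A | p.1 * ξ = p.2 * ξ}) := by
        rw [sum_norm_sq_sum_addChar_trace_mul ψ hψ A (· * ξ)]
    _ ≤ #A * (Fintype.card (Matrix ι ι F) *
          (#A * Fintype.card F ^ ((Fintype.card ι - 1) * Fintype.card ι))) := by
        gcongr
        exact_mod_cast hcollide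
    _ = _ := by ring

lemma card_pow_four_le_of_norm_le (hψ : ψ ≠ 1) (A : Finset (Matrix ι ι F)) (M : Matrix ι ι F)
    (hM : ∀ a₁ ∈ A, ∀ a₂ ∈ A, ∀ a₃ ∈ A, ∀ a₄ ∈ A, M ≠ a₁ * a₂ + a₃ + a₄) {B : ℝ} (hB₀ : 0 ≤ B)
    (hB : ∀ ξ ≠ 0, ‖∑ a₁ ∈ A, ∑ a₂ ∈ A, ψ (trace (a₁ * a₂ * ξ))‖ ≤ B) :
    (#A : ℝ) ^ 4 ≤ B * (Fintype.card (Matrix ι ι F) * #A) := by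
  set S := fun ξ => ∑ a₁ ∈ A, ∑ a₂ ∈ A, ψ (trace (a₁ * a₂ * ξ))
  set W := fun ξ => ∑ a ∈ A, ψ (trace (a * ξ))
  have hzero : ∑ ξ, S ξ * W ξ ^ 2 * ψ (trace (-M * ξ)) = 0 := by
    rw [sum_fourier_mul_add_add]
    exact sum_eq_zero fun a₁ h₁ => sum_eq_zero fun a₂ h₂ => sum_eq_zero fun a₃ h₃ =>
      sum_eq_zero fun a₄ h₄ =>
        sum_addChar_trace_mul_eq_zero ψ hψ (sub_ne_zero.2 (hM a₁ h₁ a₂ h₂ a₃ h₃ a₄ h₄).symm)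
  have hmain : S 0 * W 0 ^ 2 * ψ (trace (-M * 0)) = (#A : ℂ) ^ 4 := by
    simp only [S, W, Matrix.mul_zero, trace_zero, AddChar.map_zero_eq_one, sum_const,
      nsmul_eq_mul, mul_one]
    ring
  rw [← add_sum_erase _ _ (mem_univ 0), hmain, add_eq_zero_iff_eq_neg] at hzero
  calc (#A : ℝ) ^ 4 = ‖∑ ξ ∈ univ.erase 0, S ξ * W ξ ^ 2 * ψ (trace (-M * ξ))‖ := by
        rw [← norm_neg, ← hzero, norm_pow, Complex.norm_natCast]
    _ ≤ ∑ ξ ∈ univ.erase 0, B * ‖W ξ‖ ^ 2 := norm_sum_le_of_le _ fun ξ hξ => by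
        rw [norm_mul, norm_mul, AddChar.norm_apply, mul_one, norm_pow]
        gcongr
        exact hB ξ (ne_of_mem_erase hξ)
    _ ≤ B * ∑ ξ, ‖W ξ‖ ^ 2 := by
        rw [← mul_sum]
        gcongr
        exact erase_subset _ _
    _ = B * (Fintype.card (Matrix ι ι F) * #A) := by
        rw [sum_norm_sq_sum_addChar_trace_mul' ψ hψ A]

theorem card_pow_four_le_of_forall_ne (A : Finset (Matrix ι ι F)) (M : Matrix ι ι F)
    (hM : ∀ a₁ ∈ A, ∀ a₂ ∈ A, ∀ a₃ ∈ A, ∀ a₄ ∈ A, M ≠ a₁ * a₂ + a₃ + a₄) :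
    #A ^ 4 ≤ Fintype.card F ^ (4 * Fintype.card ι ^ 2 - Fintype.card ι) := by
  obtain ⟨ψ, hψ⟩ : ∃ ψ : AddChar F ℂ, ψ 1 ≠ 1 := AddChar.exists_apply_ne_zero.2 one_ne_zero
  replace hψ : ψ ≠ 1 := fun h => hψ (h ▸ AddChar.one_apply 1)
  set N : ℝ := ↑(Fintype.card (Matrix ι ι F)) with hN
  set K : ℝ := (Fintype.card F : ℝ) ^ ((Fintype.card ι - 1) * Fintype.card ι) with hK
  have hS (ξ : Matrix ι ι F) (hξ : ξ ≠ 0) :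
      ‖∑ a₁ ∈ A, ∑ a₂ ∈ A, ψ (trace (a₁ * a₂ * ξ))‖ ≤ #A * √(N * K) := by
    rw [← Real.sqrt_sq (Nat.cast_nonneg #A), ← Real.sqrt_mul (by positivity), ← mul_assoc]
    exact Real.le_sqrt_of_sq_le (norm_sq_sum_sum_addChar_trace_mul_mul_le ψ hψ A hξ)
  have hfourier : (#A : ℝ) ^ 4 ≤ #A * √(N * K) * (N * #A) :=
    card_pow_four_le_of_norm_le ψ hψ A M hM (by positivity) hS
  rcases (#A).eq_zero_or_pos with hA₀ | hA₀
  · simp [hA₀]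
  have hcard_sq : (#A : ℝ) ^ 2 ≤ N * √(N * K) := by
    refine le_of_mul_le_mul_left ?_ (pow_pos (Nat.cast_pos.2 hA₀) 2)
    linarith
  have hcard_pow : (#A : ℝ) ^ 4 ≤ N ^ 3 * K := by
    have := pow_le_pow_left₀ (by positivity) hcard_sq 2
    rw [mul_pow, Real.sq_sqrt (by positivity)] at this
    linarith
  have hexp : 4 * Fintype.card ι ^ 2 - Fintype.card ι =
      3 * (Fintype.card ι * Fintype.card ι) + (Fintype.card ι - 1) * Fintype.card ι := by
    have := Nat.le_self_pow two_ne_zero (Fintype.card ι)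
    rw [Nat.sub_one_mul, ← sq]
    omega
  rw [hN, hK, card_matrix] at hcard_pow
  rw [hexp, pow_add, mul_comm 3, pow_mul]
  exact_mod_cast hcard_pow

end

/-- xy + z + t is a strong expander over M_n(F_q) with exponent 1/4. -/
theorem strong_expander_xy_add_z_add_t (n : ℕ) (hn : 1 ≤ n) :
    ∃ C : ℝ, 0 < C ∧
      ∀ (F : Type) [Field F] [Fintype F],
        Odd (Fintype.card F) →
        ∀ A : Set (Matrix (Fin n) (Fin n) F),
          C * (Fintype.card F : ℝ) ^ ((n : ℝ) ^ 2 - 1 / 4) ≤ (A.ncard : ℝ) →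
          ∀ M : Matrix (Fin n) (Fin n) F,
            ∃ a₁ ∈ A, ∃ a₂ ∈ A, ∃ a₃ ∈ A, ∃ a₄ ∈ A, M = a₁ * a₂ + a₃ + a₄ := by
  classical
  refine ⟨2, two_pos, fun F _ _ _ A hA M => ?_⟩
  by_contra! hM
  have hle := card_pow_four_le_of_forall_ne A.toFinset M (by simpa using hM)
  rw [← Set.ncard_eq_toFinset_card', Fintype.card_fin] at hle
  replace hle : (A.ncard : ℝ) ^ 4 ≤ (Fintype.card F : ℝ) ^ (4 * n ^ 2 - n) := by exact_mod_cast hle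
  set q : ℝ := ↑(Fintype.card F)
  have hexp : q ^ (4 * n ^ 2 - n) ≤ (q ^ ((n : ℝ) ^ 2 - 1 / 4)) ^ 4 := by
    rw [← Real.rpow_natCast, ← Real.rpow_natCast, ← Real.rpow_mul (by positivity)]
    refine Real.rpow_le_rpow_of_exponent_le (Nat.one_le_cast.2 Fintype.card_pos) ?_
    rw [Nat.cast_sub (by nlinarith)]
    push_cast
    linarith [(Nat.one_le_cast (α := ℝ)).2 hn]
  have hpos : 0 < (q ^ ((n : ℝ) ^ 2 - 1 / 4)) ^ 4 := by positivity
  have hA4 := pow_le_pow_left₀ (by positivity) hA 4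
  rw [mul_pow] at hA4
  linarith
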